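/- Let β ∈ (0,1), R ∈ (0, 1-β), and set ρ* = log₂( (1-β)(1-R) / (β·R) ). For every ρ_max ≥ ρ*, one has sup_{0 < ρ ≤ ρ_max} ( E_0(ρ) - ρ·R ) = D(1-R ‖ β). -/
import Mathlib

/-- Base-2 Gallager function of the binary erasure channel with erasure probability `β`. -/
noncomputable def gallagerE0 (β ρ : ℝ) : ℝ := -Real.logb 2 (β + (1 - β) * 2 ^ (-ρ))

/-- Binary Kullback–Leibler divergence `D(p‖q)` measured in bits. -/
noncomputable def binaryKL (p q : ℝ) : ℝ :=
  p * Real.logb 2 (p / q) + (1 - p) * Real.logb 2 ((1 - p) / (1 - q))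

open Real in
lemma aux_ub {β R : ℝ} (hβ0 : 0 < β) (hβ1 : β < 1) (hR0 : 0 < R) (hR1 : R < 1 - β)
    (ρ : ℝ) : gallagerE0 β ρ - ρ * R ≤ binaryKL (1 - R) β := by
  have h1β : 0 < 1 - β := by linarith
  have h1R : 0 < 1 - R := by linarith
  set x : ℝ := (2:ℝ) ^ (-ρ) with hxdef
  have hx0 : 0 < x := Real.rpow_pos_of_pos (by norm_num) _
  have hρx : ρ = -Real.logb 2 x := by
    rw [hxdef, Real.logb_rpow (by norm_num) (by norm_num)]; ring
  have hgm := Real.geom_mean_le_arith_mean2_weighted (le_of_lt h1R) (le_of_lt hR0)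
      (le_of_lt (div_pos hβ0 h1R)) (le_of_lt (div_pos (mul_pos h1β hx0) hR0)) (by ring)
  have hsum : (1 - R) * (β / (1 - R)) + R * ((1 - β) * x / R) = β + (1 - β) * x := by
    field_simp
  rw [hsum] at hgm
  have hgl : Real.logb 2 ((β / (1-R)) ^ (1-R) * ((1-β)*x/R) ^ R)
      ≤ Real.logb 2 (β + (1-β)*x) :=
    Real.logb_le_logb_of_le (by norm_num) (by positivity) hgm
  rw [Real.logb_mul (by positivity) (by positivity),
      Real.logb_rpow_eq_mul_logb_of_pos (by positivity),
      Real.logb_rpow_eq_mul_logb_of_pos (by positivity),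
      Real.logb_div (ne_of_gt hβ0) (ne_of_gt h1R),
      Real.logb_div (by positivity) (ne_of_gt hR0),
      Real.logb_mul (ne_of_gt h1β) (ne_of_gt hx0)] at hgl
  unfold gallagerE0 binaryKL
  rw [show (1:ℝ)-(1-R) = R from by ring,
      Real.logb_div (ne_of_gt h1R) (ne_of_gt hβ0),
      Real.logb_div (ne_of_gt hR0) (ne_of_gt h1β), ← hxdef, hρx]
  nlinarith [hgl]

open Real in
lemma aux_eq {β R : ℝ} (hβ0 : 0 < β) (hβ1 : β < 1) (hR0 : 0 < R) (hR1 : R < 1 - β) :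
    gallagerE0 β (Real.logb 2 ((1 - β) * (1 - R) / (β * R)))
      - Real.logb 2 ((1 - β) * (1 - R) / (β * R)) * R = binaryKL (1 - R) β := by
  have h1β : 0 < 1 - β := by linarith
  have h1R : 0 < 1 - R := by linarith
  have ht : (0:ℝ) < (1 - β) * (1 - R) / (β * R) := by positivity
  have hx : (2:ℝ) ^ (-(Real.logb 2 ((1 - β) * (1 - R) / (β * R))))
      = β * R / ((1 - β) * (1 - R)) := by
    rw [Real.rpow_neg (by norm_num), Real.rpow_logb (by norm_num) (by norm_num) ht, inv_div]
  have hs : β + (1 - β) * (β * R / ((1 - β) * (1 - R))) = β / (1 - R) := by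
    field_simp; ring
  unfold gallagerE0 binaryKL
  rw [hx, hs, show (1:ℝ)-(1-R) = R from by ring,
      Real.logb_div (ne_of_gt hβ0) (ne_of_gt h1R),
      Real.logb_div (ne_of_gt h1R) (ne_of_gt hβ0),
      Real.logb_div (ne_of_gt hR0) (ne_of_gt h1β),
      Real.logb_div (by positivity) (by positivity),
      Real.logb_mul (ne_of_gt h1β) (ne_of_gt h1R),
      Real.logb_mul (ne_of_gt hβ0) (ne_of_gt hR0)]
  ring

/-- Constrained sphere-packing evaluation: if the constraint `ρ_max` is at least the
unconstrained maximizer `ρ* = log₂((1-β)(1-R)/(βR))`, then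
`sup_{0 < ρ ≤ ρ_max} (E_0(ρ) - ρ R) = D(1-R‖β)`. -/
theorem constrained_sphere_packing (β R : ℝ) (hβ : β ∈ Set.Ioo (0 : ℝ) 1)
    (hR : R ∈ Set.Ioo (0 : ℝ) (1 - β)) (ρmax : ℝ)
    (hρmax : Real.logb 2 ((1 - β) * (1 - R) / (β * R)) ≤ ρmax) :
    sSup ((fun ρ => gallagerE0 β ρ - ρ * R) '' Set.Ioc 0 ρmax) = binaryKL (1 - R) β := by
  obtain ⟨hβ0, hβ1⟩ := hβ
  obtain ⟨hR0, hR1⟩ := hR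
  have h1β : 0 < 1 - β := by linarith
  have h1R : 0 < 1 - R := by linarith
  have ht1 : (1:ℝ) < (1 - β) * (1 - R) / (β * R) := by
    rw [one_lt_div (by positivity)]; nlinarith
  have hρpos : 0 < Real.logb 2 ((1 - β) * (1 - R) / (β * R)) :=
    Real.logb_pos (by norm_num) ht1
  have hmem : Real.logb 2 ((1 - β) * (1 - R) / (β * R)) ∈ Set.Ioc (0:ℝ) ρmax :=
    ⟨hρpos, hρmax⟩
  apply le_antisymm
  · apply csSup_le ⟨_, Set.mem_image_of_mem _ hmem⟩
    rintro y ⟨ρ, -, rfl⟩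
    exact aux_ub hβ0 hβ1 hR0 hR1 ρ
  · apply le_csSup
    · exact ⟨binaryKL (1 - R) β, by rintro y ⟨ρ, -, rfl⟩; exact aux_ub hβ0 hβ1 hR0 hR1 ρ⟩
    · exact ⟨_, hmem, aux_eq hβ0 hβ1 hR0 hR1⟩
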